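/- arXiv:math/9911085 — 3 statements merged into one kernel-verified Lean document; each statement's English description precedes it below -/
import Mathlib

section
/- Every irreducible PSL(2,ℂ)-representation of the free product ℤ/2 * ℤ/3 = ⟨c,d | c², d³⟩ is conjugate to one of the form ρ_z with ρ_z(c) = ±[[i,0],[0,-i]] and ρ_z(d) = ±[[z,1],[z(1-z)-1, 1-z]] for some z ∈ ℂ, and for such a representation, trace(ρ_z(cd))² = -(2z-1)², so the function χ ↦ trace²(cd) - 4 is a degree-2 polynomial function of z. -/
open Matrix Complex

/-- `SL(2,ℂ)`. -/
abbrev SL2C := Matrix.SpecialLinearGroup (Fin 2) ℂ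

/-- `PSL(2,ℂ)` as the quotient of `SL(2,ℂ)` by its center. -/
abbrev PSL2C' := SL2C ⧸ Subgroup.center SL2C

/-- The projection `SL(2,ℂ) → PSL(2,ℂ)`. -/
noncomputable def projPSL : SL2C →* PSL2C' := QuotientGroup.mk' _

/-- Relations of the free product `ℤ/2 * ℤ/3 = ⟨c, d | c², d³⟩`. -/
def relsZ2Z3 : Set (FreeGroup (Fin 2)) :=
  {(FreeGroup.of 0) ^ 2, (FreeGroup.of 1) ^ 3}

/-- The matrix `[[i,0],[0,-i]]` as an element of `SL(2,ℂ)`. -/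
noncomputable def Cel : SL2C :=
  ⟨!![Complex.I, 0; 0, -Complex.I], by
    simp [Matrix.det_fin_two_of, Complex.I_mul_I]⟩

/-- The matrix `[[z,1],[z(1-z)-1, 1-z]]` as an element of `SL(2,ℂ)`. -/
noncomputable def Del (z : ℂ) : SL2C :=
  ⟨!![z, 1; z * (1 - z) - 1, 1 - z], by
    simp [Matrix.det_fin_two_of]⟩

/-!
A lift to `SL(2,ℂ)` of a nontrivial element of `PSL(2,ℂ)` is not scalar, so by Cayley–Hamilton
(`A² = tr A • A - 1`) the relations `c² = 1` and `d³ = 1` force `tr C = 0` and `tr D = ±1`;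
replacing `D` by `-D` gives `tr D = 1`. All trace-zero elements are conjugate to `Cel`. The
elements of `PSL(2,ℂ)` fixing `Cel` under conjugation include the diagonal and the anti-diagonal
matrices, and conjugating by one of them brings the lift of `d` to the form `Del z`, unless it is
diagonal, in which case it commutes with `Cel` and the representation is reducible.
-/

local notation "M₂" => Matrix (Fin 2) (Fin 2) ℂ

lemma coe_Cel : (Cel : M₂) = !![I, 0; 0, -I] := rfl

lemma coe_Del (z : ℂ) : (Del z : M₂) = !![z, 1; z * (1 - z) - 1, 1 - z] := rfl

lemma projPSL_surjective : Function.Surjective projPSL := QuotientGroup.mk'_surjective _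

lemma projPSL_eq_iff {A B : SL2C} :
    projPSL A = projPSL B ↔ ∃ r : ℂ, (A : M₂) = r • (B : M₂) := by
  rw [eq_comm, projPSL, QuotientGroup.mk'_apply, QuotientGroup.mk'_apply, QuotientGroup.eq,
    Matrix.SpecialLinearGroup.mem_center_iff]
  simp only [Fintype.card_fin, Matrix.scalar_apply, ← Matrix.smul_one_eq_diagonal,
    Matrix.SpecialLinearGroup.coe_mul]
  constructor
  · rintro ⟨r, -, hr⟩
    refine ⟨r, ?_⟩
    calc (A : M₂) = B * ((B⁻¹ : SL2C) * A) := by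
          rw [← mul_assoc, ← Matrix.SpecialLinearGroup.coe_mul, mul_inv_cancel,
            Matrix.SpecialLinearGroup.coe_one, one_mul]
      _ = r • B := by rw [← hr, Matrix.mul_smul, mul_one]
  · rintro ⟨r, hr⟩
    have hBA : ((B⁻¹ : SL2C) : M₂) * A = r • 1 := by
      rw [hr, Matrix.mul_smul, ← Matrix.SpecialLinearGroup.coe_mul, inv_mul_cancel,
        Matrix.SpecialLinearGroup.coe_one]
    refine ⟨r, ?_, hBA.symm⟩
    simpa [Matrix.det_smul] using (congrArg Matrix.det hr).symm

lemma projPSL_eq_one_iff {A : SL2C} : projPSL A = 1 ↔ ∃ r : ℂ, (A : M₂) = r • 1 := by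
  simpa using projPSL_eq_iff (B := 1)

lemma projPSL_Cel_ne_one : projPSL Cel ≠ 1 := by
  rw [Ne, projPSL_eq_one_iff]
  rintro ⟨r, hr⟩
  have h00 : I = r := by simpa [coe_Cel] using congrFun (congrFun hr 0) 0
  have h11 : -I = r := by simpa [coe_Cel] using congrFun (congrFun hr 1) 1
  exact I_ne_zero (by linear_combination (h00 - h11) / 2)

instance : Nontrivial PSL2C' := ⟨⟨_, _, projPSL_Cel_ne_one⟩⟩

lemma eq_zero_of_smul_eq_smul_one {A : SL2C} (hA : projPSL A ≠ 1) {a b : ℂ}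
    (h : a • (A : M₂) = b • 1) : a = 0 := by
  by_contra ha
  refine hA (projPSL_eq_one_iff.2 ⟨a⁻¹ * b, ?_⟩)
  rw [mul_smul, ← h, smul_smul, inv_mul_cancel₀ ha, one_smul]

lemma sq_eq_trace_smul_sub_one (A : SL2C) :
    (A : M₂) ^ 2 = trace (A : M₂) • (A : M₂) - 1 := by
  have := Matrix.aeval_self_charpoly (A : M₂)
  rw [Matrix.charpoly_fin_two, A.det_coe] at this
  simp only [map_add, map_sub, map_pow, Polynomial.aeval_X, Polynomial.aeval_C, map_one, map_mul,
    Algebra.algebraMap_eq_smul_one, smul_mul_assoc, one_mul] at this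
  rw [← sub_eq_zero, ← this]
  abel

lemma exists_lift_trace_eq_zero {x : PSL2C'} (hx : x ^ 2 = 1) (hx1 : x ≠ 1) :
    ∃ C : SL2C, projPSL C = x ∧ trace (C : M₂) = 0 := by
  obtain ⟨C, rfl⟩ := projPSL_surjective x
  obtain ⟨r, hr⟩ := projPSL_eq_one_iff.1 (by rwa [map_pow] : projPSL (C ^ 2) = 1)
  rw [Matrix.SpecialLinearGroup.coe_pow, sq_eq_trace_smul_sub_one] at hr
  refine ⟨C, rfl, eq_zero_of_smul_eq_smul_one hx1 (b := r + 1) ?_⟩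
  linear_combination (norm := module) hr

lemma exists_lift_trace_eq_one {y : PSL2C'} (hy : y ^ 3 = 1) (hy1 : y ≠ 1) :
    ∃ E : SL2C, projPSL E = y ∧ trace (E : M₂) = 1 := by
  obtain ⟨D, rfl⟩ := projPSL_surjective y
  obtain ⟨r, hr⟩ := projPSL_eq_one_iff.1 (by rwa [map_pow] : projPSL (D ^ 3) = 1)
  set t := trace (D : M₂)
  have hcube : (D : M₂) ^ 3 = (t ^ 2 - 1) • (D : M₂) - t • 1 := by
    rw [pow_succ', sq_eq_trace_smul_sub_one, mul_sub, mul_one, mul_smul_comm, ← sq,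
      sq_eq_trace_smul_sub_one]
    module
  rw [Matrix.SpecialLinearGroup.coe_pow, hcube] at hr
  have ht : t ^ 2 - 1 = 0 :=
    eq_zero_of_smul_eq_smul_one hy1 (b := r + t) (by linear_combination (norm := module) hr)
  rcases sq_eq_one_iff.1 (sub_eq_zero.1 ht) with ht | ht
  · exact ⟨D, rfl, ht⟩
  · exact ⟨-D, projPSL_eq_iff.2 ⟨-1, by simp⟩, by simp [t, ht]⟩

lemma exists_conj_of_mul_eq_smul_mul (Y : M₂) (hY : Y.det ≠ 0) :
    ∃ P : PSL2C', ∀ (A B : SL2C) (r : ℂ), (A : M₂) * Y = r • (Y * B) →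
      projPSL A = P * projPSL B * P⁻¹ := by
  obtain ⟨s, hs⟩ := IsAlgClosed.exists_eq_mul_self Y.det⁻¹
  have hQ : (s • Y).det = 1 := by
    rw [det_smul, Fintype.card_fin, sq, ← hs, inv_mul_cancel₀ hY]
  let Q : SL2C := ⟨s • Y, hQ⟩
  refine ⟨projPSL Q, fun A B r h => ?_⟩
  rw [eq_mul_inv_iff_mul_eq, ← map_mul, ← map_mul, projPSL_eq_iff]
  refine ⟨r, ?_⟩
  change (A : M₂) * (s • Y) = r • ((s • Y) * (B : M₂))
  rw [Matrix.mul_smul, h, Matrix.smul_mul, smul_comm]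

lemma det_add_add_det_sub {R : Type*} [CommRing R] (X Y : Matrix (Fin 2) (Fin 2) R) :
    (X + Y).det + (X - Y).det = 2 * (X.det + Y.det) := by
  simp only [Matrix.det_fin_two, Matrix.add_apply, Matrix.sub_apply]
  ring

-- `C ± Cel` intertwines `C` with `±Cel` because `C² = Cel² = -1`, and the two determinants add
-- up to `4`, so one of them is invertible.
lemma exists_conj_Cel_of_trace_eq_zero (C : SL2C) (hC : trace (C : M₂) = 0) :
    ∃ P : PSL2C', projPSL C = P * projPSL Cel * P⁻¹ := by
  have hC2 : (C : M₂) * C = -1 := by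
    rw [← sq, sq_eq_trace_smul_sub_one, hC, zero_smul, zero_sub]
  have hCel2 : (Cel : M₂) * Cel = -1 := by
    simp [coe_Cel, Matrix.one_fin_two]
  have hdet : (C + Cel : M₂).det + (C - Cel : M₂).det = 4 := by
    rw [det_add_add_det_sub, C.det_coe, Cel.det_coe]
    norm_num
  by_cases hplus : (C + Cel : M₂).det = 0
  · obtain ⟨P, hP⟩ := exists_conj_of_mul_eq_smul_mul (C - Cel : M₂)
      (by rw [hplus, zero_add] at hdet; rw [hdet]; norm_num)
    refine ⟨P, hP C Cel (-1) ?_⟩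
    rw [mul_sub, sub_mul, hC2, hCel2]
    module
  · obtain ⟨P, hP⟩ := exists_conj_of_mul_eq_smul_mul (C + Cel : M₂) hplus
    refine ⟨P, hP C Cel 1 ?_⟩
    rw [mul_add, add_mul, hC2, hCel2, one_smul, add_comm]

-- Conjugation by `!![0, 1; c, 0]` sends `Cel` to `-Cel`, which is `Cel` in `PSL(2,ℂ)`.
lemma exists_conj_Del_of_trace_eq_one (E : SL2C) (hE : trace (E : M₂) = 1)
    (hEC : ¬Commute (projPSL Cel) (projPSL E)) :
    ∃ (z : ℂ) (P : PSL2C'), projPSL Cel = P * projPSL Cel * P⁻¹ ∧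
      projPSL E = P * projPSL (Del z) * P⁻¹ := by
  induction E using Matrix.SpecialLinearGroup.fin_two_induction with | h a b c d hdet =>
  obtain rfl : d = 1 - a := by
    rw [Matrix.SpecialLinearGroup.coe_mk, Matrix.trace_fin_two_of] at hE
    linear_combination hE
  have hbc : b * c = a * (1 - a) - 1 := by linear_combination -hdet
  by_cases hb : b = 0
  · by_cases hc : c = 0
    · refine absurd (Commute.map ?_ projPSL) hEC
      apply Subtype.ext
      change (Cel : M₂) * !![a, b; c, 1 - a] = !![a, b; c, 1 - a] * Cel
      simp [coe_Cel, hb, hc, mul_comm]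
    · obtain ⟨P, hP⟩ := exists_conj_of_mul_eq_smul_mul !![0, 1; c, 0] (by simpa using hc)
      refine ⟨1 - a, P, hP _ _ (-1) ?_, hP _ _ 1 ?_⟩
      · simp [coe_Cel, mul_comm]
      · simp [coe_Del, hbc, mul_comm]
  · obtain ⟨P, hP⟩ := exists_conj_of_mul_eq_smul_mul !![b, 0; 0, 1] (by simpa using hb)
    refine ⟨a, P, hP _ _ 1 ?_, hP _ _ 1 ?_⟩
    · simp [coe_Cel, mul_comm]
    · simp [coe_Del, ← hbc, mul_comm]

lemma exists_conj_Cel_Del {x y : PSL2C'} (hx : x ^ 2 = 1) (hy : y ^ 3 = 1)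
    (hxy : ¬Commute x y) : ∃ (z : ℂ) (P : PSL2C'),
      x = P * projPSL Cel * P⁻¹ ∧ y = P * projPSL (Del z) * P⁻¹ := by
  obtain ⟨C, rfl, hC⟩ := exists_lift_trace_eq_zero hx (by rintro rfl; exact hxy (.one_left y))
  obtain ⟨P, hP⟩ := exists_conj_Cel_of_trace_eq_zero C hC
  have hy' : y = P * (P⁻¹ * y * P) * P⁻¹ := by group
  obtain ⟨E, hE, hEtr⟩ := exists_lift_trace_eq_one (y := P⁻¹ * y * P)
    (by simpa [hy] using (map_pow (MulAut.conj P⁻¹) y 3).symm)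
    (by intro h; rw [h] at hy'; exact hxy (by rw [hy']; simp))
  obtain ⟨z, P', hP'C, hP'E⟩ := exists_conj_Del_of_trace_eq_one E hEtr <| by
    intro h
    apply hxy
    rw [hP, hy', ← hE]
    exact (Commute.conj_iff P).2 h
  refine ⟨z, P * P', ?_, ?_⟩
  · conv_lhs => rw [hP, hP'C]
    group
  · conv_lhs => rw [hy', ← hE, hP'E]
    group

lemma not_commute_of_forall_commute_imp_eq_one {G : Type*} [Group G] [Nontrivial G] {x y : G}
    (h : ∀ A, Commute A x → Commute A y → A = 1) : ¬Commute x y := by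
  intro hxy
  obtain rfl := h x (.refl x) hxy
  obtain rfl := h y (.one_right y) (.refl y)
  obtain ⟨A, hA⟩ := exists_ne (1 : G)
  exact hA (h A (.one_right A) (.one_right A))

lemma PresentedGroup.commute_map_of_commute_map_of {α G : Type*} [Group G]
    {rels : Set (FreeGroup α)} (f : PresentedGroup rels →* G) {A : G}
    (h : ∀ i, Commute A (f (.of i))) (g : PresentedGroup rels) : Commute A (f g) := by
  have : (MulAut.conj A).toMonoidHom.comp f = f :=
    PresentedGroup.ext fun i => by simp [(h i).eq]
  simpa [Commute, SemiconjBy, mul_inv_eq_iff_eq_mul] using DFunLike.congr_fun this g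

lemma trace_Cel_mul_Del_sq (z : ℂ) :
    trace ((Cel : M₂) * (Del z : M₂)) ^ 2 = -(2 * z - 1) ^ 2 := by
  rw [coe_Cel, coe_Del, Matrix.mul_fin_two, Matrix.trace_fin_two_of]
  linear_combination (2 * z - 1) ^ 2 * I_sq

/-- Every irreducible `PSL(2,ℂ)`-representation of `ℤ/2 * ℤ/3 = ⟨c,d | c², d³⟩` is
conjugate to one of the representations `ρ_z` with `ρ_z(c) = ±[[i,0],[0,-i]]` and
`ρ_z(d) = ±[[z,1],[z(1-z)-1,1-z]]` for some `z ∈ ℂ`; for these,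
`trace(ρ_z(cd))² = -(2z-1)²`, so `χ ↦ trace²(cd) - 4` is a degree-two polynomial
function of `z`. -/
theorem irreducible_reps_of_Z2_free_Z3 (ρ : PresentedGroup relsZ2Z3 →* PSL2C')
    (hirr : ∀ A : PSL2C', (∀ g, A * ρ g = ρ g * A) → A = 1) :
    (∃ z : ℂ, ∃ P : PSL2C',
      ρ (PresentedGroup.of 0) = P * projPSL Cel * P⁻¹ ∧
      ρ (PresentedGroup.of 1) = P * projPSL (Del z) * P⁻¹) ∧
    (∀ z : ℂ,
      (Matrix.trace ((Cel : Matrix (Fin 2) (Fin 2) ℂ) * (Del z : Matrix (Fin 2) (Fin 2) ℂ))) ^ 2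
        = -(2 * z - 1) ^ 2) ∧
    (∃ p : Polynomial ℂ, p.degree = 2 ∧ ∀ z : ℂ,
      (Matrix.trace ((Cel : Matrix (Fin 2) (Fin 2) ℂ) * (Del z : Matrix (Fin 2) (Fin 2) ℂ))) ^ 2
        - 4 = p.eval z) := by
  have hc : (PresentedGroup.of 0 : PresentedGroup relsZ2Z3) ^ 2 = 1 :=
    (map_pow _ _ _).symm.trans (PresentedGroup.one_of_mem (by simp [relsZ2Z3]))
  have hd : (PresentedGroup.of 1 : PresentedGroup relsZ2Z3) ^ 3 = 1 :=
    (map_pow _ _ _).symm.trans (PresentedGroup.one_of_mem (by simp [relsZ2Z3]))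
  have hirr' : ∀ A, Commute A (ρ (.of 0)) → Commute A (ρ (.of 1)) → A = 1 := fun A h0 h1 =>
    hirr A (PresentedGroup.commute_map_of_commute_map_of ρ (Fin.forall_fin_two.2 ⟨h0, h1⟩))
  refine ⟨exists_conj_Cel_Del (by rw [← map_pow, hc, map_one])
    (by rw [← map_pow, hd, map_one]) (not_commute_of_forall_commute_imp_eq_one hirr'),
    trace_Cel_mul_Del_sq, ?_⟩
  refine ⟨.C (-4) * .X ^ 2 + .C 4 * .X + .C (-5), Polynomial.degree_quadratic (by norm_num),
    fun z => ?_⟩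
  rw [trace_Cel_mul_Del_sq]
  simp only [Polynomial.eval_add, Polynomial.eval_mul, Polynomial.eval_C, Polynomial.eval_pow,
    Polynomial.eval_X]
  ring
end

section
/- Let n ≡ 5 (mod 30), n odd. Then every primitive 15th root of unity ζ is a simple (non-repeated) root of the Alexander polynomial Δ_n(t) = (t-1)(t^{n+3}-1)/(t+1) + t(t³+1)(t^n+1)/(t+1)² of the (-2,3,n) pretzel knot. -/
/-!
Let `Φ₁₅ = X⁸ - X⁷ + X⁵ - X⁴ + X³ - X + 1`. At a root `t` of `Φ₁₅` we have `t¹⁵ = 1`, so for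
`n ≡ 5 (mod 15)` the powers `tⁿ, tⁿ⁺², tⁿ⁺³` become `t⁵, t⁷, t⁸`. Then
`P_n(t) = (t + 1)² Φ₁₅(t) = 0`, while `P_n'(t)` becomes a polynomial of degree 9 in `t`, which we
reduce modulo `Φ₁₅`: the remainder is a rational polynomial of degree at most `7`, nonzero because
its coefficients of `X⁷` and `X⁶`, `n + 6` and `-(n + 5)`, cannot both vanish. As `Φ₁₅` is the
minimal polynomial over `ℚ` of a primitive `15`-th root of unity, of degree `φ(15) = 8`, this
remainder does not vanish at `ζ`.
-/

/-- The cleared-denominator form of the Alexander polynomial of the `(-2,3,n)` pretzel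
knot: `P_n(t) = (t-1)(t+1)(t^{n+3}-1) + t(t³+1)(t^n+1)`, so that
`Δ_n(t) = P_n(t)/(t+1)²`. -/
noncomputable def pretzelAlexanderNum' (n : ℤ) (t : ℂ) : ℂ :=
  (t - 1) * (t + 1) * (t ^ (n + 3) - 1) + t * (t ^ (3 : ℤ) + 1) * (t ^ n + 1)

open Polynomial

theorem zpow_eq_zpow_emod₀ {G₀ : Type*} [GroupWithZero G₀] {x : G₀} (hx : x ≠ 0) (m : ℤ)
    {k : ℤ} (h : x ^ k = 1) : x ^ m = x ^ (m % k) :=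
  calc x ^ m = x ^ (m % k + k * (m / k)) := by rw [Int.emod_add_mul_ediv]
    _ = x ^ (m % k) := by rw [zpow_add₀ hx, zpow_mul, h, one_zpow, mul_one]

theorem IsPrimitiveRoot.totient_le_natDegree_of_aeval_eq_zero {K : Type*} [Field K] [CharZero K]
    {ζ : K} {k : ℕ} (hζ : IsPrimitiveRoot ζ k) (hk : 0 < k) {p : ℚ[X]} (hp : p ≠ 0)
    (hζp : aeval ζ p = 0) : k.totient ≤ p.natDegree := by
  have := natDegree_le_of_dvd (minpoly.dvd ℚ ζ hζp) hp
  rwa [← cyclotomic_eq_minpoly_rat hζ hk, natDegree_cyclotomic] at this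

theorem IsPrimitiveRoot.cyclotomic_fifteen_relation {R : Type*} [CommRing R] [IsDomain R] {ζ : R}
    (hζ : IsPrimitiveRoot ζ 15) : ζ ^ 8 - ζ ^ 7 + ζ ^ 5 - ζ ^ 4 + ζ ^ 3 - ζ + 1 = 0 := by
  have h3 := (hζ.pow (by norm_num) (show 15 = 5 * 3 by rfl)).geom_sum_eq_zero (by norm_num)
  have h5 := (hζ.pow (by norm_num) (show 15 = 3 * 5 by rfl)).geom_sum_eq_zero (by norm_num)
  simp only [Finset.sum_range_succ, Finset.sum_range_zero] at h3 h5
  linear_combination (ζ ^ 3 + 1) * h3 - ζ * h5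

theorem zpow_eq_pow_of_cyclotomic_fifteen {K : Type*} [Field K] {t : K}
    (hΦ : t ^ 8 - t ^ 7 + t ^ 5 - t ^ 4 + t ^ 3 - t + 1 = 0) {m : ℤ} {r : ℕ} (hm : m % 15 = r) :
    t ^ m = t ^ r := by
  have h15 : t ^ (15 : ℤ) = 1 := by
    rw [zpow_ofNat]
    linear_combination (t ^ 7 + t ^ 6 + t ^ 5 - t ^ 2 - t - 1) * hΦ
  have ht : t ≠ 0 := by rintro rfl; norm_num at hΦ
  rw [zpow_eq_zpow_emod₀ ht m h15, hm, zpow_natCast]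

theorem hasDerivAt_pretzelAlexanderNum' (n : ℤ) {t : ℂ} (ht : t ≠ 0) :
    HasDerivAt (pretzelAlexanderNum' n)
      (2 * t * (t ^ (n + 3) - 1) + (n + 3) * (t ^ 2 - 1) * t ^ (n + 2)
        + (4 * t ^ 3 + 1) * (t ^ n + 1) + n * (t ^ 3 + 1) * t ^ n) t := by
  have hid := hasDerivAt_id t
  have hA := ((hid.sub_const 1).mul (hid.add_const 1)).mul
    ((hasDerivAt_zpow (n + 3) t (.inl ht)).sub_const 1)
  have hB := (hid.mul ((hasDerivAt_zpow 3 t (.inl ht)).add_const 1)).mul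
    ((hasDerivAt_zpow n t (.inl ht)).add_const 1)
  refine (hA.add hB).congr_deriv ?_
  simp only [id, Pi.mul_apply, zpow_sub_one₀ ht, zpow_add₀ ht]
  push_cast
  field_simp
  ring

noncomputable def pretzelDerivRemainder (n : ℤ) : ℚ[X] :=
  C ((n : ℚ) + 6) * X ^ 7 - C ((n : ℚ) + 5) * X ^ 6 - C 3 * X ^ 5 + C ((n : ℚ) + 4) * X ^ 4
    - C (2 * (n : ℚ) + 5) * X ^ 3 + C ((n : ℚ) + 5) * X ^ 2 + C ((n : ℚ) + 2) * X
    - C (2 * (n : ℚ) + 8)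

theorem natDegree_pretzelDerivRemainder_le (n : ℤ) : (pretzelDerivRemainder n).natDegree ≤ 7 := by
  unfold pretzelDerivRemainder
  compute_degree!

theorem pretzelDerivRemainder_ne_zero (n : ℤ) : pretzelDerivRemainder n ≠ 0 := by
  intro h
  have h76 := congr_arg (fun p : ℚ[X] => p.coeff 7 + p.coeff 6) h
  simp only [pretzelDerivRemainder, coeff_sub, coeff_add, coeff_C_mul, coeff_X_pow, coeff_C,
    coeff_X, coeff_zero] at h76
  norm_num at h76
  linarith

theorem pretzelAlexanderNum'_eq_zero_of_cyclotomic_fifteen {n : ℤ} (hn : n % 15 = 5) {t : ℂ}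
    (hΦ : t ^ 8 - t ^ 7 + t ^ 5 - t ^ 4 + t ^ 3 - t + 1 = 0) : pretzelAlexanderNum' n t = 0 := by
  rw [pretzelAlexanderNum', zpow_eq_pow_of_cyclotomic_fifteen hΦ (m := n + 3) (r := 8) (by omega),
    zpow_eq_pow_of_cyclotomic_fifteen hΦ hn, zpow_ofNat]
  linear_combination (t + 1) ^ 2 * hΦ

theorem deriv_pretzelAlexanderNum'_eq_aeval_of_cyclotomic_fifteen {n : ℤ} (hn : n % 15 = 5) {t : ℂ}
    (hΦ : t ^ 8 - t ^ 7 + t ^ 5 - t ^ 4 + t ^ 3 - t + 1 = 0) :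
    deriv (pretzelAlexanderNum' n) t = aeval t (pretzelDerivRemainder n) := by
  have ht : t ≠ 0 := by rintro rfl; norm_num at hΦ
  rw [(hasDerivAt_pretzelAlexanderNum' n ht).deriv,
    zpow_eq_pow_of_cyclotomic_fifteen hΦ (m := n + 3) (r := 8) (by omega),
    zpow_eq_pow_of_cyclotomic_fifteen hΦ (m := n + 2) (r := 7) (by omega),
    zpow_eq_pow_of_cyclotomic_fifteen hΦ hn]
  simp only [pretzelDerivRemainder, map_sub, map_add, map_mul, map_pow, aeval_C, aeval_X,
    eq_ratCast]
  push_cast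
  linear_combination ((n + 5) * t + (2 * n + 9)) * hΦ

/-- For `n ≡ 5 (mod 30)`, every primitive `15`-th root of unity `ζ` is a simple
(non-repeated) root of the Alexander polynomial of the `(-2,3,n)` pretzel knot:
`P_n(ζ) = 0` and `P_n'(ζ) ≠ 0`. -/
theorem alexander_simple_root_at_fifteenth (n : ℤ) (hn : n % 30 = 5) (ζ : ℂ)
    (hζ : IsPrimitiveRoot ζ 15) :
    pretzelAlexanderNum' n ζ = 0 ∧ deriv (pretzelAlexanderNum' n) ζ ≠ 0 := by
  have hn15 : n % 15 = 5 := by omega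
  have hΦ := hζ.cyclotomic_fifteen_relation
  refine ⟨pretzelAlexanderNum'_eq_zero_of_cyclotomic_fifteen hn15 hΦ, ?_⟩
  rw [deriv_pretzelAlexanderNum'_eq_aeval_of_cyclotomic_fifteen hn15 hΦ]
  intro h
  have h8 :=
    hζ.totient_le_natDegree_of_aeval_eq_zero (by norm_num) (pretzelDerivRemainder_ne_zero n) h
  have h7 := natDegree_pretzelDerivRemainder_le n
  rw [show Nat.totient 15 = 8 by decide] at h8
  omega
end

section
/- Suppose nonnegative integers a₁, a₂, a₃, a₄ (with at least two of them positive) satisfy, for a fixed odd integer n ≥ 7: (i) 2[a₁ + a₂ + a₃ + ((n−3)/2)a₄] ≤ 3(n−3); (ii) 0 ≤ (2n+3)a₁ + a₂ + (2n−13)a₃ − ((n−5)/2)a₄ ≤ 3(n−7)/2; (iii) 0 ≤ (2n+3)a₁ + (2n−12)a₃ − a₄ ≤ 2(n−7). Then a₁ = 0, a₃ = 1, a₄ = 2, and 0 ≤ a₂ ≤ (n−5)/2. -/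
/-- Let `n ≥ 7` be odd and let `a₁, a₂, a₃, a₄` (here `a 0, a 1, a 2, a 3`) be
nonnegative integers, at least two of which are positive, satisfying
(i) `2[a₁ + a₂ + a₃ + ((n−3)/2)a₄] ≤ 3(n−3)`;
(ii) `0 ≤ (2n+3)a₁ + a₂ + (2n−13)a₃ − ((n−5)/2)a₄ ≤ 3(n−7)/2`;
(iii) `0 ≤ (2n+3)a₁ + (2n−12)a₃ − a₄ ≤ 2(n−7)`.
Then `a₁ = 0`, `a₃ = 1`, `a₄ = 2` and `0 ≤ a₂ ≤ (n−5)/2`. -/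
theorem norm_curve_coefficients (n : ℤ) (hn : Odd n) (hn7 : 7 ≤ n)
    (a : Fin 4 → ℤ) (ha : ∀ i, 0 ≤ a i)
    (htwo : 2 ≤ (Finset.univ.filter (fun i => 0 < a i)).card)
    (h1 : 2 * (a 0 + a 1 + a 2 + ((n - 3) / 2) * a 3) ≤ 3 * (n - 3))
    (h2l : 0 ≤ (2 * n + 3) * a 0 + a 1 + (2 * n - 13) * a 2 - ((n - 5) / 2) * a 3)
    (h2r : (2 * n + 3) * a 0 + a 1 + (2 * n - 13) * a 2 - ((n - 5) / 2) * a 3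
      ≤ 3 * (n - 7) / 2)
    (h3l : 0 ≤ (2 * n + 3) * a 0 + (2 * n - 12) * a 2 - a 3)
    (h3r : (2 * n + 3) * a 0 + (2 * n - 12) * a 2 - a 3 ≤ 2 * (n - 7)) :
    a 0 = 0 ∧ a 2 = 1 ∧ a 3 = 2 ∧ 0 ≤ a 1 ∧ a 1 ≤ (n - 5) / 2 := by
  obtain ⟨k, hk⟩ := hn
  have hk3 : 3 ≤ k := by omega
  have ha0 := ha 0; have ha1 := ha 1; have ha2 := ha 2; have ha3 := ha 3
  have e1 : (n - 3) / 2 = k - 1 := by omega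
  have e2 : (n - 5) / 2 = k - 2 := by omega
  have e3 : 3 * (n - 7) / 2 = 3 * k - 9 := by omega
  rw [e1] at h1
  rw [e2] at h2l h2r
  rw [e3] at h2r
  subst hk
  -- a 3 ≤ 3
  have hD3 : a 3 ≤ 3 := by
    by_contra h
    push_neg at h
    nlinarith [mul_le_mul_of_nonneg_left (show (4:ℤ) ≤ a 3 by omega) (show (0:ℤ) ≤ k - 1 by omega)]
  -- a 0 = 0
  have hA : a 0 = 0 := by
    by_contra h
    have hA1 : 1 ≤ a 0 := by omega
    nlinarith [mul_le_mul_of_nonneg_left hA1 (show (0:ℤ) ≤ 2*(2*k+1)+3 by omega),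
      mul_nonneg (show (0:ℤ) ≤ 2*(2*k+1)-12 by omega) ha2]
  rw [hA] at h1 h2l h2r h3l h3r
  -- a 2 = 1
  have hC1 : 1 ≤ a 2 := by
    by_contra h
    have hc0 : a 2 = 0 := by omega
    rw [hc0] at h3l
    have hd0 : a 3 = 0 := by linarith
    have hsub : (Finset.univ.filter (fun i => 0 < a i)) ⊆ {1} := by
      intro i hi
      simp only [Finset.mem_filter] at hi
      fin_cases i <;> simp_all
    have hcard := Finset.card_le_card hsub
    simp at hcard
    omega
  have hC : a 2 = 1 := by
    by_contra h
    have hC2 : 2 ≤ a 2 := by omega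
    nlinarith [mul_le_mul_of_nonneg_left hC2 (show (0:ℤ) ≤ 2*(2*k+1)-12 by omega)]
  rw [hC] at h1 h2l h2r h3l h3r
  -- a 3 = 2
  have hDge : 2 ≤ a 3 := by linarith
  have hD : a 3 = 2 := by
    by_contra h
    have hD3' : a 3 = 3 := by omega
    rw [hD3'] at h1
    linarith
  refine ⟨hA, hC, hD, ha1, ?_⟩
  rw [hD] at h2r
  omega
end
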